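/- For every n ≥ 2 there exist distinct points w_1, …, w_{n+1} ∈ ℂ, positive reals μ_1, …, μ_{n+1}, and a source ζ ∈ ℂ such that the zero-shear lensing map η(z) = z − Σ_{j=1}^{n+1} μ_j/(conj(z) − conj(w_j)) on ℂ \ {w_1, …, w_{n+1}} has exactly 5n images of ζ, i.e., the Khavinson–Neumann bound 5(n+1) − 5 = 5n is attained for every number n + 1 ≥ 3 of point masses. -/

import Mathlib

/-!
Take the source `ζ = 0` and put `N` equal masses of total mass `M` at the points `ωʲ a` of a
circle (`ω` a primitive `N`-th root of unity), possibly with a mass `ε` at the centre.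
Conjugating the lens equation and summing over the ring turns it into
`conj x * x = M xᴺ / (xᴺ - aᴺ) + ε`, which forces `xᴺ` to be real: `xᴺ = ±rᴺ` where `r = |x|`
is a positive root of `(r² - ε)(rᴺ ∓ aᴺ) = M rᴺ`, and each such radius carries `N` images.
Descartes' rule of signs allows at most `2 + 3` such radii (`1 + 2` when `ε = 0`), and the
intermediate value theorem shows that all of them occur for Rhie's lens (`n ≥ 3` masses of
total mass `4` on the unit circle, `1/256` at the centre): `5n` images. For `n = 2`, the
Mao–Petters–Witt lens of three unit masses at the cube roots of unity has `3 (1 + 2)` images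
off the centre, and the centre itself is the tenth.
-/

open Polynomial Finset ComplexConjugate

namespace Polynomial

section SignVariations

variable {R : Type*} [Semiring R] {c : R} {d : ℕ} {Q : R[X]}

lemma natDegree_C_mul_X_pow_add (hc : c ≠ 0) (hQ : Q.natDegree < d) :
    (C c * X ^ d + Q).natDegree = d := by
  rw [natDegree_add_eq_left_of_natDegree_lt (by rwa [natDegree_C_mul_X_pow d c hc]),
    natDegree_C_mul_X_pow d c hc]

lemma leadingCoeff_C_mul_X_pow_add (hc : c ≠ 0) (hQ : Q.natDegree < d) :
    (C c * X ^ d + Q).leadingCoeff = c := by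
  rw [leadingCoeff, natDegree_C_mul_X_pow_add hc hQ, coeff_add, coeff_C_mul_X_pow, if_pos rfl,
    coeff_eq_zero_of_natDegree_lt hQ, add_zero]

lemma signVariations_C_mul_X_pow_add [LinearOrder R] (hc : c ≠ 0) (hQ : Q.natDegree < d) :
    signVariations (C c * X ^ d + Q) =
      signVariations Q + if SignType.sign c = -SignType.sign Q.leadingCoeff then 1 else 0 := by
  have hdeg : Q.natDegree < (C c * X ^ d).natDegree := by rwa [natDegree_C_mul_X_pow d c hc]
  have hP : C c * X ^ d + Q ≠ 0 := fun h => hc <| by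
    rw [← leadingCoeff_C_mul_X_pow_add hc hQ, h, leadingCoeff_zero]
  rw [signVariations_eq_eraseLead_add_ite hP, leadingCoeff_C_mul_X_pow_add hc hQ,
    eraseLead_add_of_natDegree_lt_left hdeg, eraseLead_C_mul_X_pow, zero_add]

lemma signVariations_four_terms [LinearOrder R] {c₃ c₂ c₁ c₀ : R} {d₃ d₂ d₁ : ℕ}
    (h₃ : c₃ ≠ 0) (h₂ : c₂ ≠ 0) (h₁ : c₁ ≠ 0) (hd₃ : d₂ < d₃) (hd₂ : d₁ < d₂) (hd₁ : 0 < d₁) :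
    signVariations (C c₃ * X ^ d₃ + (C c₂ * X ^ d₂ + (C c₁ * X ^ d₁ + C c₀))) =
      (if SignType.sign c₃ = -SignType.sign c₂ then 1 else 0) +
      (if SignType.sign c₂ = -SignType.sign c₁ then 1 else 0) +
      (if SignType.sign c₁ = -SignType.sign c₀ then 1 else 0) := by
  have hQ₁ : (C c₀).natDegree < d₁ := by rwa [natDegree_C]
  have hQ₂ := (natDegree_C_mul_X_pow_add h₁ hQ₁).trans_lt hd₂
  have hQ₃ := (natDegree_C_mul_X_pow_add h₂ hQ₂).trans_lt hd₃
  rw [signVariations_C_mul_X_pow_add h₃ hQ₃, signVariations_C_mul_X_pow_add h₂ hQ₂,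
    signVariations_C_mul_X_pow_add h₁ hQ₁, leadingCoeff_C_mul_X_pow_add h₂ hQ₂,
    leadingCoeff_C_mul_X_pow_add h₁ hQ₁, leadingCoeff_C, ← monomial_zero_left,
    signVariations_monomial]
  ring

end SignVariations

noncomputable def posRoots (P : ℝ[X]) : Finset ℝ := P.roots.toFinset.filter (0 < ·)

variable {P : ℝ[X]}

lemma mem_posRoots (hP : P ≠ 0) {r : ℝ} : r ∈ posRoots P ↔ 0 < r ∧ P.eval r = 0 := by
  rw [posRoots, mem_filter, Multiset.mem_toFinset, mem_roots hP, IsRoot.def, and_comm]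

lemma card_posRoots_le_signVariations : #(posRoots P) ≤ P.signVariations := by
  refine le_trans ?_ (roots_countP_pos_le_signVariations P)
  rw [posRoots, ← Multiset.toFinset_filter, Multiset.countP_eq_card_filter]
  exact Multiset.toFinset_card_le _

lemma exists_mem_Ioo_eval_eq_zero {x y : ℝ} (hxy : x ≤ y) (h : P.eval x * P.eval y < 0) :
    ∃ r ∈ Set.Ioo x y, P.eval r = 0 := by
  have hc := P.continuous.continuousOn (s := Set.Icc x y)
  rcases mul_neg_iff.mp h with ⟨hx, hy⟩ | ⟨hx, hy⟩
  · exact intermediate_value_Ioo' hxy hc ⟨hy, hx⟩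
  · exact intermediate_value_Ioo hxy hc ⟨hx, hy⟩

lemma le_card_posRoots {k : ℕ} (x : Fin (k + 1) → ℝ) (hx : StrictMono x)
    (hx₀ : 0 ≤ x 0) (hsign : ∀ i : Fin k, P.eval (x i.castSucc) * P.eval (x i.succ) < 0) :
    k ≤ #(posRoots P) := by
  choose y hy hPy using fun i : Fin k =>
    exists_mem_Ioo_eval_eq_zero (hx.monotone i.castSucc_lt_succ.le) (hsign i)
  have hy_mono : StrictMono y := fun i j hij =>
    ((hy i).2.trans_le (hx.monotone (Fin.succ_le_castSucc_iff.mpr hij))).trans (hy j).1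
  have hy_pos : ∀ i, 0 < y i := fun i =>
    hx₀.trans_lt ((hx.monotone (Fin.zero_le _)).trans_lt (hy i).1)
  calc k = #(univ.image y) := by rw [card_image_of_injective _ hy_mono.injective, card_fin]
    _ ≤ #(posRoots P) := card_le_card fun r hr => by
      obtain ⟨i, -, rfl⟩ := mem_image.mp hr
      have hP : P ≠ 0 := fun h => by simpa [h] using hsign i
      exact (mem_posRoots hP).mpr ⟨hy_pos i, hPy i⟩

lemma card_posRoots_eq {k : ℕ} (hvar : P.signVariations ≤ k)
    (x : Fin (k + 1) → ℝ) (hx : StrictMono x) (hx₀ : 0 ≤ x 0)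
    (hsign : ∀ i : Fin k, P.eval (x i.castSucc) * P.eval (x i.succ) < 0) :
    #(posRoots P) = k :=
  le_antisymm (card_posRoots_le_signVariations.trans hvar) (le_card_posRoots x hx hx₀ hsign)

end Polynomial

lemma sum_inv_sub_pow_mul {𝕜 : Type*} [NontriviallyNormedField 𝕜] {N : ℕ} {ω : 𝕜}
    (hω : IsPrimitiveRoot ω N) {c x : 𝕜} (hx : x ^ N ≠ c ^ N) :
    ∑ j ∈ range N, (x - ω ^ j * c)⁻¹ = N * x ^ (N - 1) / (x ^ N - c ^ N) := by
  have hN : 0 < N := Nat.pos_of_ne_zero (by rintro rfl; simp at hx)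
  have hprod : (fun z => z ^ N - c ^ N) = fun z => ∏ j ∈ range N, (z - ω ^ j * c) := by
    funext z
    simpa [eval_prod] using congrArg (eval z) (X_pow_sub_C_eq_prod hω hN (rfl : c ^ N = _))
  have hne : ∀ j ∈ range N, x - ω ^ j * c ≠ 0 := fun j _ h => hx <| by
    rw [sub_eq_zero.mp h, mul_pow, ← pow_mul, mul_comm j, pow_mul, hω.pow_eq_one, one_pow, one_mul]
  calc ∑ j ∈ range N, (x - ω ^ j * c)⁻¹
      = ∑ j ∈ range N, logDeriv (fun z => z - ω ^ j * c) x := by simp [logDeriv_apply]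
    _ = logDeriv (fun z => z ^ N - c ^ N) x := by
      rw [hprod, logDeriv_prod hne (fun _ _ => by fun_prop)]
    _ = N * x ^ (N - 1) / (x ^ N - c ^ N) := by simp [logDeriv_apply]

lemma pow_eq_pow_iff_exists_eq_pow_mul {K : Type*} [CommRing K] [IsDomain K] {N : ℕ} (hN : 0 < N)
    {ω : K} (hω : IsPrimitiveRoot ω N) {c x : K} :
    x ^ N = c ^ N ↔ ∃ j : Fin N, x = ω ^ (j : ℕ) * c := by
  rw [← mem_nthRoots hN, hω.nthRoots_eq rfl, Multiset.mem_map]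
  simp only [Multiset.mem_range, eq_comm (a := x)]
  exact ⟨fun ⟨j, hj, h⟩ => ⟨⟨j, hj⟩, h⟩, fun ⟨j, h⟩ => ⟨j, j.isLt, h⟩⟩

lemma norm_eq_of_pow_eq_mul {N : ℕ} (hN : N ≠ 0) {x σ : ℂ} (hσ : ‖σ‖ = 1) {r : ℝ} (hr : 0 ≤ r)
    (h : x ^ N = σ * (r : ℂ) ^ N) : ‖x‖ = r := by
  have : ‖x‖ ^ N = r ^ N := by
    simpa only [norm_mul, norm_pow, hσ, one_mul, Complex.norm_real, Real.norm_of_nonneg hr]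
      using congrArg norm h
  exact (pow_left_inj₀ (norm_nonneg x) hr hN).mp this

lemma Complex.card_nthRootsFinset {N : ℕ} (hN : N ≠ 0) {c : ℂ} (hc : c ≠ 0) :
    #(nthRootsFinset N c) = N := by
  classical
  have hω := Complex.isPrimitiveRoot_exp N hN
  rw [nthRootsFinset_def, Multiset.toFinset_card_of_nodup (hω.nthRoots_nodup hc),
    hω.card_nthRoots, if_pos (IsAlgClosed.exists_pow_nat_eq c (Nat.pos_of_ne_zero hN))]

lemma card_biUnion_nthRootsFinset {N : ℕ} (hN : 0 < N) {s : Finset ℝ} (hs : ∀ r ∈ s, 0 < r) {σ : ℂ}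
    (hσ : ‖σ‖ = 1) : #(s.biUnion fun r => nthRootsFinset N (σ * (r : ℂ) ^ N)) = N * #s := by
  rw [card_biUnion, sum_const_nat (m := N), mul_comm]
  · intro r hr
    refine Complex.card_nthRootsFinset hN.ne' (mul_ne_zero ?_ ?_)
    · exact norm_ne_zero_iff.mp (by rw [hσ]; exact one_ne_zero)
    · exact pow_ne_zero _ (Complex.ofReal_ne_zero.mpr (hs r hr).ne')
  · intro r hr r' hr' hne
    refine disjoint_left.mpr fun x hx hx' => hne ?_
    rw [mem_nthRootsFinset hN] at hx hx'
    exact (norm_eq_of_pow_eq_mul hN.ne' hσ (hs r hr).le hx).symm.trans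
      (norm_eq_of_pow_eq_mul hN.ne' hσ (hs r' hr').le hx')

def lensImages {ι : Type*} [Fintype ι] (w : ι → ℂ) (μ : ι → ℝ) (ζ : ℂ) : Set ℂ :=
  {x | (∀ j, x ≠ w j) ∧ x - ∑ j, (μ j : ℂ) / (conj x - conj (w j)) = ζ}

lemma mem_lensImages_zero {ι : Type*} [Fintype ι] {w : ι → ℂ} {μ : ι → ℝ} {x : ℂ} :
    x ∈ lensImages w μ 0 ↔ (∀ j, x ≠ w j) ∧ conj x = ∑ j, (μ j : ℂ) / (x - w j) := by
  refine and_congr_right fun _ => ?_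
  rw [sub_eq_zero, ← (starRingEnd ℂ).injective.eq_iff]
  simp [map_sum, map_div₀]

lemma ofReal_eq_mul_div_sub_add_iff {M ε s b : ℝ} (hM : M ≠ 0) (hb : b ≠ 0) {y : ℂ} :
    (y ≠ b ∧ (s : ℂ) = M * y / (y - b) + ε) ↔ ∃ t : ℝ, y = t ∧ (s - ε) * (t - b) = M * t := by
  constructor
  · rintro ⟨hyb, h⟩
    have hy : ((s - ε : ℝ) : ℂ) * (y - b) = M * y := by
      rw [← sub_eq_iff_eq_add, eq_div_iff (sub_ne_zero.mpr hyb)] at h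
      push_cast; exact h
    have hsM : s - ε - M ≠ 0 := fun h0 => hb <| by
      have : ((M * b : ℝ) : ℂ) = 0 := by
        rw [show s - ε = M by linarith] at hy; push_cast; linear_combination -hy
      exact (mul_eq_zero.mp (Complex.ofReal_eq_zero.mp this)).resolve_left hM
    refine ⟨(s - ε) * b / (s - ε - M), ?_, ?_⟩
    · push_cast
      rw [eq_div_iff (by exact_mod_cast hsM)]
      push_cast at hy
      linear_combination hy
    · field_simp
      ring
  · rintro ⟨t, rfl, h⟩
    have htb : t - b ≠ 0 := fun h0 => by
      rw [h0, mul_zero, eq_comm, mul_eq_zero] at h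
      exact h.elim hM fun ht => hb (by linarith)
    refine ⟨fun h0 => htb (by exact_mod_cast sub_eq_zero.mpr h0), ?_⟩
    rw [← sub_eq_iff_eq_add, eq_div_iff (by exact_mod_cast htb)]
    exact_mod_cast h

section RingImages

variable (N : ℕ) (a M ε : ℝ)

noncomputable def radialPlus : ℝ[X] := (X ^ 2 - C ε) * (X ^ N - C (a ^ N)) - C M * X ^ N

noncomputable def radialMinus : ℝ[X] := (X ^ 2 - C ε) * (X ^ N + C (a ^ N)) - C M * X ^ N

lemma radialPlus_eq : radialPlus N a M ε =
    C 1 * X ^ (N + 2) + (C (-(M + ε)) * X ^ N + (C (-a ^ N) * X ^ 2 + C (ε * a ^ N))) := by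
  simp only [radialPlus, map_neg, map_add, map_mul, map_one]
  ring

lemma radialMinus_eq : radialMinus N a M ε =
    C 1 * X ^ (N + 2) + (C (-(M + ε)) * X ^ N + (C (a ^ N) * X ^ 2 + C (-(ε * a ^ N)))) := by
  simp only [radialMinus, map_neg, map_add, map_mul, map_one]
  ring

lemma eval_radialPlus (r : ℝ) :
    (radialPlus N a M ε).eval r = (r ^ 2 - ε) * (r ^ N - a ^ N) - M * r ^ N := by
  simp [radialPlus]

lemma eval_radialMinus (r : ℝ) :
    (radialMinus N a M ε).eval r = (r ^ 2 - ε) * (r ^ N + a ^ N) - M * r ^ N := by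
  simp [radialMinus]

variable {N a M ε}

lemma radialPlus_ne_zero (hN : N ≠ 0) : radialPlus N a M ε ≠ 0 := fun h => by
  have h₂ := congrArg (coeff · (N + 2)) h
  simp only [radialPlus_eq, coeff_add, coeff_C_mul_X_pow, coeff_C, coeff_zero] at h₂
  split_ifs at h₂ <;> first | omega | norm_num at h₂

lemma radialMinus_ne_zero (hN : N ≠ 0) : radialMinus N a M ε ≠ 0 := fun h => by
  have h₂ := congrArg (coeff · (N + 2)) h
  simp only [radialMinus_eq, coeff_add, coeff_C_mul_X_pow, coeff_C, coeff_zero] at h₂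
  split_ifs at h₂ <;> first | omega | norm_num at h₂

-- The solutions `x` of `conj x * x = M xᴺ / (xᴺ - aᴺ) + ε`, sorted by `r = |x|` and the sign
-- of `xᴺ = ±rᴺ`.
variable (N a M ε) in
noncomputable def ringImages : Finset ℂ :=
  (posRoots (radialPlus N a M ε)).biUnion (fun r => nthRootsFinset N ((r : ℂ) ^ N)) ∪
    (posRoots (radialMinus N a M ε)).biUnion (fun r => nthRootsFinset N (-(r : ℂ) ^ N))

lemma mem_ringImages_iff (hN : 0 < N) (ha : 0 < a) (hM : M ≠ 0) {x : ℂ} :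
    x ∈ ringImages N a M ε ↔
      x ≠ 0 ∧ x ^ N ≠ (a : ℂ) ^ N ∧ conj x * x = M * x ^ N / (x ^ N - (a : ℂ) ^ N) + ε := by
  have hb : a ^ N ≠ 0 := (pow_pos ha N).ne'
  rw [Complex.conj_mul', ← Complex.ofReal_pow, ← Complex.ofReal_pow,
    ofReal_eq_mul_div_sub_add_iff hM hb]
  simp only [ringImages, mem_union, mem_biUnion, mem_nthRootsFinset hN, ← exists_or,
    mem_posRoots (radialPlus_ne_zero hN.ne'), mem_posRoots (radialMinus_ne_zero hN.ne')]
  constructor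
  · rintro ⟨r, ⟨⟨hr, hPr⟩, hx⟩ | ⟨⟨hr, hPr⟩, hx⟩⟩
    · have hxr := norm_eq_of_pow_eq_mul hN.ne' norm_one hr.le (by rw [hx, one_mul])
      refine ⟨norm_pos_iff.mp (hxr ▸ hr), r ^ N, by push_cast; exact hx, ?_⟩
      rw [hxr]
      linear_combination (eval_radialPlus N a M ε r).symm.trans hPr
    · have hxr := norm_eq_of_pow_eq_mul hN.ne' (σ := -1) (by simp) hr.le (by rw [hx, neg_one_mul])
      refine ⟨norm_pos_iff.mp (hxr ▸ hr), -r ^ N, by push_cast; exact hx, ?_⟩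
      rw [hxr]
      linear_combination -(eval_radialMinus N a M ε r).symm.trans hPr
  · rintro ⟨hx0, t, hx, ht⟩
    have hr := norm_pos_iff.mpr hx0
    have habs : |t| = ‖x‖ ^ N := by
      rw [← Real.norm_eq_abs, ← Complex.norm_real, ← hx, norm_pow]
    refine ⟨‖x‖, ?_⟩
    rcases (abs_eq (pow_nonneg hr.le N)).mp habs with rfl | rfl
    · refine .inl ⟨⟨hr, ?_⟩, by rw [hx]; push_cast; rfl⟩
      rw [eval_radialPlus]
      linear_combination ht
    · refine .inr ⟨⟨hr, ?_⟩, by rw [hx]; push_cast; rfl⟩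
      rw [eval_radialMinus]
      linear_combination -ht

lemma card_ringImages (hN : 0 < N) :
    #(ringImages N a M ε) =
      N * (#(posRoots (radialPlus N a M ε)) + #(posRoots (radialMinus N a M ε))) := by
  have hpos : ∀ {P : ℝ[X]}, ∀ r ∈ posRoots P, 0 < r := fun _ hr => (mem_filter.mp hr).2
  have hdisj : Disjoint
      ((posRoots (radialPlus N a M ε)).biUnion fun r => nthRootsFinset N (1 * (r : ℂ) ^ N))
      ((posRoots (radialMinus N a M ε)).biUnion fun r => nthRootsFinset N (-1 * (r : ℂ) ^ N)) := by
    refine disjoint_left.mpr fun x hx hx' => ?_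
    obtain ⟨r, hr, hxr⟩ := mem_biUnion.mp hx
    obtain ⟨r', hr', hxr'⟩ := mem_biUnion.mp hx'
    rw [mem_nthRootsFinset hN] at hxr hxr'
    have h : ((r ^ N + r' ^ N : ℝ) : ℂ) = 0 := by
      push_cast
      linear_combination hxr.symm.trans hxr'
    have := hpos r hr
    have := hpos r' hr'
    exact (by positivity : 0 < r ^ N + r' ^ N).ne' (Complex.ofReal_eq_zero.mp h)
  rw [mul_add, ← card_biUnion_nthRootsFinset hN hpos norm_one,
    ← card_biUnion_nthRootsFinset hN hpos (σ := -1) (by simp), ← card_union_of_disjoint hdisj]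
  simp only [ringImages, one_mul, neg_one_mul]

end RingImages

section RingLens

variable {N : ℕ} {ω : ℂ} {a M ε : ℝ} {x : ℂ}

lemma sum_div_sub_pow_mul (hω : IsPrimitiveRoot ω N) (hx : x ^ N ≠ (a : ℂ) ^ N) :
    ∑ j : Fin N, ((M / N : ℝ) : ℂ) / (x - ω ^ (j : ℕ) * a) =
      M * x ^ (N - 1) / (x ^ N - (a : ℂ) ^ N) := by
  have hN : (N : ℂ) ≠ 0 := Nat.cast_ne_zero.mpr (by rintro rfl; simp at hx)
  simp_rw [div_eq_mul_inv _ (x - _), ← mul_sum]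
  rw [Fin.sum_univ_eq_sum_range (fun j => (x - ω ^ j * a)⁻¹), sum_inv_sub_pow_mul hω hx]
  push_cast
  field_simp

lemma forall_ne_pow_mul_iff (hN : 0 < N) (hω : IsPrimitiveRoot ω N) :
    (∀ j : Fin N, x ≠ ω ^ (j : ℕ) * a) ↔ x ^ N ≠ (a : ℂ) ^ N := by
  rw [Ne, pow_eq_pow_iff_exists_eq_pow_mul hN hω, not_exists]

lemma conj_eq_add_div_iff (hN : 0 < N) (hx : x ≠ 0) {c : ℂ} :
    conj x = M * x ^ (N - 1) / (x ^ N - c) + ε / x ↔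
      conj x * x = M * x ^ N / (x ^ N - c) + ε := by
  rw [← eq_div_iff hx, add_div, ← Nat.sub_add_cancel hN, pow_succ, Nat.add_sub_cancel]
  field_simp

lemma lensImages_ring_center (hN : 0 < N) (hω : IsPrimitiveRoot ω N) (ha : 0 < a) (hM : M ≠ 0) :
    lensImages (Fin.snoc (α := fun _ => ℂ) (fun j : Fin N => ω ^ (j : ℕ) * a) 0)
      (Fin.snoc (α := fun _ => ℝ) (fun _ => M / N) ε) 0 = ringImages N a M ε := by
  ext x
  rw [mem_lensImages_zero, Fin.forall_fin_succ', Fin.sum_univ_castSucc, mem_coe,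
    mem_ringImages_iff hN ha hM]
  simp only [Fin.snoc_castSucc, Fin.snoc_last, sub_zero, forall_ne_pow_mul_iff hN hω]
  constructor
  · rintro ⟨⟨hxN, hx⟩, h⟩
    exact ⟨hx, hxN, (conj_eq_add_div_iff hN hx).mp (by rwa [sum_div_sub_pow_mul hω hxN] at h)⟩
  · rintro ⟨hx, hxN, h⟩
    exact ⟨⟨hxN, hx⟩, by rw [sum_div_sub_pow_mul hω hxN]; exact (conj_eq_add_div_iff hN hx).mpr h⟩

lemma lensImages_ring (hN : 2 ≤ N) (hω : IsPrimitiveRoot ω N) (ha : 0 < a) (hM : M ≠ 0) :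
    lensImages (fun j : Fin N => ω ^ (j : ℕ) * a) (fun _ => M / N) 0 =
      insert 0 ↑(ringImages N a M 0) := by
  have hN₀ : 0 < N := by omega
  ext x
  rw [mem_lensImages_zero, Set.mem_insert_iff, mem_coe, mem_ringImages_iff hN₀ ha hM,
    Complex.ofReal_zero, add_zero, forall_ne_pow_mul_iff hN₀ hω]
  rcases eq_or_ne x 0 with rfl | hx
  · have ha' : (0 : ℂ) ^ N ≠ (a : ℂ) ^ N := by
      rw [zero_pow hN₀.ne']
      exact (pow_ne_zero _ (Complex.ofReal_ne_zero.mpr ha.ne')).symm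
    simp only [sum_div_sub_pow_mul hω ha', zero_pow (by omega : N - 1 ≠ 0), map_zero]
    simp [ha']
  · have h := conj_eq_add_div_iff (M := M) (ε := 0) hN₀ hx (c := (a : ℂ) ^ N)
    simp only [Complex.ofReal_zero, zero_div, add_zero] at h
    constructor
    · rintro ⟨hxN, hc⟩
      exact .inr ⟨hx, hxN, h.mp (by rwa [sum_div_sub_pow_mul hω hxN] at hc)⟩
    · rintro (rfl | ⟨-, hxN, hc⟩)
      · exact absurd rfl hx
      · exact ⟨hxN, by rw [sum_div_sub_pow_mul hω hxN]; exact h.mpr hc⟩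

end RingLens

section RootCounts

variable {N : ℕ} {a M ε : ℝ}

lemma signVariations_radialPlus (hN : 2 < N) (ha : 0 < a) (hMε : 0 < M + ε) :
    (radialPlus N a M ε).signVariations = if 0 < ε then 2 else 1 := by
  have hb := pow_pos ha N
  rw [radialPlus_eq, signVariations_four_terms one_ne_zero (neg_ne_zero.mpr hMε.ne')
    (neg_ne_zero.mpr hb.ne') (by omega) hN two_pos, Left.sign_neg, Left.sign_neg, sign_pos hMε,
    sign_mul, sign_pos hb, sign_one, mul_one]
  rcases lt_trichotomy ε 0 with hε | rfl | hε
  · simp [hε, hε.not_gt]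
  · simp
  · simp [hε]

lemma signVariations_radialMinus (hN : 2 < N) (ha : 0 < a) (hMε : 0 < M + ε) :
    (radialMinus N a M ε).signVariations = if 0 < ε then 3 else 2 := by
  have hb := pow_pos ha N
  rw [radialMinus_eq, signVariations_four_terms one_ne_zero (neg_ne_zero.mpr hMε.ne') hb.ne'
    (by omega) hN two_pos, Left.sign_neg, Left.sign_neg, sign_pos hMε, sign_mul, sign_pos hb,
    sign_one, mul_one]
  rcases lt_trichotomy ε 0 with hε | rfl | hε
  · simp [hε, hε.not_gt]
  · simp
  · simp [hε]

lemma card_posRoots_radialPlus_center {n : ℕ} (hn : 3 ≤ n) :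
    #(posRoots (radialPlus n 1 4 (1 / 256))) = 2 := by
  have h3n : (27 : ℝ) ≤ 3 ^ n := by
    calc (27 : ℝ) = 3 ^ 3 := by norm_num
      _ ≤ 3 ^ n := pow_le_pow_right₀ (by norm_num) hn
  have hvar := signVariations_radialPlus (N := n) (M := 4) (ε := 1 / 256) (by omega) one_pos
    (by norm_num)
  refine card_posRoots_eq (by rw [hvar, if_pos (by norm_num)])
    ![0, 1, 3] (by simp [Fin.strictMono_iff_lt_succ, Fin.forall_fin_two]) le_rfl ?_
  simp [Fin.forall_fin_two, eval_radialPlus, zero_pow (by omega : n ≠ 0)]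
  linarith

lemma card_posRoots_radialMinus_center {n : ℕ} (hn : 3 ≤ n) :
    #(posRoots (radialMinus n 1 4 (1 / 256))) = 3 := by
  have h3n : (27 : ℝ) ≤ 3 ^ n := by
    calc (27 : ℝ) = 3 ^ 3 := by norm_num
      _ ≤ 3 ^ n := pow_le_pow_right₀ (by norm_num) hn
  have h8n : ((8 : ℝ) ^ n)⁻¹ ≤ 512⁻¹ := by
    refine inv_anti₀ (by norm_num) ?_
    calc (512 : ℝ) = 8 ^ 3 := by norm_num
      _ ≤ 8 ^ n := pow_le_pow_right₀ (by norm_num) hn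
  have hvar := signVariations_radialMinus (N := n) (M := 4) (ε := 1 / 256) (by omega) one_pos
    (by norm_num)
  refine card_posRoots_eq (by rw [hvar, if_pos (by norm_num)])
    ![0, 1 / 8, 1, 3] (by simp [Fin.strictMono_iff_lt_succ, Fin.forall_fin_succ]; norm_num)
    le_rfl ?_
  simp [Fin.forall_fin_succ, eval_radialMinus, zero_pow (by omega : n ≠ 0)]
  refine ⟨by linarith, mul_neg_of_pos_of_neg (by linarith) (by norm_num),
    mul_neg_of_neg_of_pos (by norm_num) (by linarith)⟩

lemma card_posRoots_radialPlus_triangle : #(posRoots (radialPlus 3 1 3 0)) = 1 := by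
  refine card_posRoots_eq ?_ ![1, 2] (by simp [Fin.strictMono_iff_lt_succ]) zero_le_one
    (by norm_num [eval_radialPlus])
  simp [signVariations_radialPlus (N := 3) (by norm_num) one_pos (by norm_num : (0 : ℝ) < 3 + 0)]

lemma card_posRoots_radialMinus_triangle : #(posRoots (radialMinus 3 1 3 0)) = 2 := by
  refine card_posRoots_eq ?_ ![1 / 4, 1, 2]
    (by simp [Fin.strictMono_iff_lt_succ, Fin.forall_fin_two]; norm_num) (by norm_num)
    (by norm_num [Fin.forall_fin_two, eval_radialMinus])
  simp [signVariations_radialMinus (N := 3) (by norm_num) one_pos (by norm_num : (0 : ℝ) < 3 + 0)]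

end RootCounts

lemma injective_pow_mul {N : ℕ} {ω : ℂ} (hω : IsPrimitiveRoot ω N) {c : ℂ} (hc : c ≠ 0) :
    Function.Injective fun j : Fin N => ω ^ (j : ℕ) * c := fun i j h =>
  Fin.ext (hω.injOn_pow_mul hc (mem_coe.mpr (mem_range.mpr i.isLt)) (mem_range.mpr j.isLt) h)

theorem exists_lens_ring_center {n : ℕ} (hn : 3 ≤ n) :
    ∃ (w : Fin (n + 1) → ℂ) (μ : Fin (n + 1) → ℝ), Function.Injective w ∧ (∀ j, 0 < μ j) ∧
      (lensImages w μ 0).Finite ∧ (lensImages w μ 0).ncard = 5 * n := by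
  set ω := Complex.exp (2 * Real.pi * Complex.I / n)
  have hω : IsPrimitiveRoot ω n := Complex.isPrimitiveRoot_exp n (by omega)
  have hring := injective_pow_mul hω (c := ((1 : ℝ) : ℂ)) (by simp)
  refine ⟨Fin.snoc (α := fun _ => ℂ) (fun j : Fin n => ω ^ (j : ℕ) * ((1 : ℝ) : ℂ)) 0,
    Fin.snoc (α := fun _ => ℝ) (fun _ => 4 / n) (1 / 256),
    Fin.snoc_injective_of_injective hring ?_, ?_, ?_⟩
  · rintro ⟨j, hj⟩
    exact mul_ne_zero (pow_ne_zero _ (hω.ne_zero (by omega))) (by simp) hj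
  · have hn₀ : (0 : ℝ) < n := Nat.cast_pos.mpr (by omega)
    intro j
    induction j using Fin.lastCases <;> simp [hn₀]
  · rw [lensImages_ring_center (by omega) hω one_pos four_ne_zero (ε := 1 / 256)]
    refine ⟨finite_toSet _, ?_⟩
    rw [Set.ncard_coe_finset, card_ringImages (by omega), card_posRoots_radialPlus_center hn,
      card_posRoots_radialMinus_center hn]
    ring

theorem exists_lens_triangle :
    ∃ (w : Fin 3 → ℂ) (μ : Fin 3 → ℝ), Function.Injective w ∧ (∀ j, 0 < μ j) ∧
      (lensImages w μ 0).Finite ∧ (lensImages w μ 0).ncard = 10 := by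
  set ω := Complex.exp (2 * Real.pi * Complex.I / 3)
  have hω : IsPrimitiveRoot ω 3 := Complex.isPrimitiveRoot_exp 3 (by norm_num)
  refine ⟨fun j : Fin 3 => ω ^ (j : ℕ) * ((1 : ℝ) : ℂ), fun _ => 3 / (3 : ℕ),
    injective_pow_mul hω (by simp), fun _ => by norm_num, ?_⟩
  rw [lensImages_ring (by norm_num) hω one_pos three_ne_zero, ← coe_insert]
  have h0 : 0 ∉ ringImages 3 1 3 0 := fun h => ((mem_ringImages_iff (by norm_num) one_pos
    three_ne_zero).mp h).1 rfl
  refine ⟨finite_toSet _, ?_⟩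
  rw [Set.ncard_coe_finset, card_insert_of_notMem h0, card_ringImages (by norm_num),
    card_posRoots_radialPlus_triangle, card_posRoots_radialMinus_triangle]

/-- for every `n ≥ 2` there is a zero-shear lens on `n + 1` point
masses and a source `ζ` attaining the Khavinson–Neumann bound of
`5(n+1) - 5 = 5n` images. -/
theorem maximal_lens_exists
    (n : ℕ) (hn : 2 ≤ n) :
    ∃ (w : Fin (n + 1) → ℂ) (μ : Fin (n + 1) → ℝ) (ζ : ℂ),
      Function.Injective w ∧ (∀ j, 0 < μ j) ∧
      {x : ℂ | (∀ j, x ≠ w j) ∧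
          x - ∑ j, (μ j : ℂ) / ((starRingEnd ℂ) x - (starRingEnd ℂ) (w j)) = ζ}.Finite ∧
      {x : ℂ | (∀ j, x ≠ w j) ∧
          x - ∑ j, (μ j : ℂ) / ((starRingEnd ℂ) x - (starRingEnd ℂ) (w j)) = ζ}.ncard
        = 5 * n := by
  obtain rfl | hn := hn.eq_or_lt
  · obtain ⟨w, μ, h⟩ := exists_lens_triangle
    exact ⟨w, μ, 0, h⟩
  · obtain ⟨w, μ, h⟩ := exists_lens_ring_center hn
    exact ⟨w, μ, 0, h⟩
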